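/- Let p be a prime and let α, s, t ∈ ℕ satisfy p^α = sf + tg. If F = M − N ∈ ker φ where M and N are monic monomials of K[x₁,…,xₙ,y₁,…,yₙ], then M^{p^α} − N^{p^α} belongs to the ideal generated by F₁, …, F_{n−1}, F_{n,p}. -/

import Mathlib

/-!
Give a monomial in the `xᵢ, yᵢ` the exponent vector of its image under `φ` as its weight; the
generators `F₁, …, F_{n-1}, F_{n,p}` are binomials whose two terms have equal weight.  Modulo
`F_{n,p}` the `p^α`-th power of a monomial becomes a monomial free of `yₙ`, with `p^α` times the
weight, and modulo `F₁, …, F_{n-1}` the exponents of `y₁, …, y_{n-1}` can then be reduced below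
`fg` without changing the weight.  Such a reduced monomial is determined by its weight, because
the weight at `uᵢ` is `fg·(exponent of xᵢ) + (f-g)·(exponent of yᵢ)` and `f - g` is coprime to
`fg`.  Hence `M^{p^α}` and `N^{p^α}` have the same reduced form modulo the ideal.
-/

open MvPolynomial

lemma Nat.eq_and_eq_of_mul_add_mul_eq {N D x x' r r' : ℕ} (hD : D.Coprime N) (hr : r < N)
    (hr' : r' < N) (h : N * x + D * r = N * x' + D * r') : x = x' ∧ r = r' := by
  have hrr : r = r' := by
    have hmod : D * r ≡ D * r' [MOD N] := by
      simpa [Nat.ModEq, Nat.mul_add_mod] using congrArg (· % N) h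
    exact (Nat.ModEq.cancel_left_of_coprime (Nat.coprime_comm.mp hD) hmod).eq_of_lt_of_lt hr hr'
  subst hrr
  exact ⟨Nat.eq_of_mul_eq_mul_left (r.zero_le.trans_lt hr) (Nat.add_right_cancel h), rfl⟩

lemma reduced_eq_of_weight_eq {m N D : ℕ} (hN : 0 < N) (hD : D.Coprime N)
    {e e' r r' : Fin m → ℕ} {en en' : ℕ}
    (hr : ∀ j, r j < N) (hr' : ∀ j, r' j < N)
    (hw : ∀ j, N * e j + D * r j = N * e' j + D * r' j)
    (hwn : N * en + D * ∑ j, r j = N * en' + D * ∑ j, r' j) :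
    e = e' ∧ en = en' ∧ r = r' := by
  have he := fun j => Nat.eq_and_eq_of_mul_add_mul_eq hD (hr j) (hr' j) (hw j)
  have hre : r = r' := funext fun j => (he j).2
  subst hre
  exact ⟨funext fun j => (he j).1, Nat.eq_of_mul_eq_mul_left hN (Nat.add_right_cancel hwn), rfl⟩

-- The left-hand sides are the weights of the reduced form of `(x^A xₙ^Aₙ y^B yₙ^C)^P`,
-- as computed by `evalMonomial_pow_of_pow_eq` and `evalMonomial_eq_of_pow_eq` below.
lemma weight_reduced_pow_eq {m N D P β γ δ c w : ℕ}
    (hβ : N * β + D * δ = c * P) (hγ : N * γ + m * D * δ = w * P)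
    (A : Fin m → ℕ) (An : ℕ) (B : Fin m → ℕ) (C : ℕ) :
    (∀ j, N * (P * A j + β * C + D * ((P * B j + δ * C) / N)) + D * ((P * B j + δ * C) % N) =
        P * (N * A j + D * B j + c * C)) ∧
      N * (P * An + γ * C + D * ∑ j, (P * B j + δ * C) / N) +
          D * ∑ j, (P * B j + δ * C) % N =
        P * (N * An + D * ∑ j, B j + w * C) := by
  refine ⟨fun j => ?_, ?_⟩
  · linear_combination D * Nat.div_add_mod (P * B j + δ * C) N + C * hβ
  · have hsum : ∑ j, (N * ((P * B j + δ * C) / N) + (P * B j + δ * C) % N) =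
        P * ∑ j, B j + m * (δ * C) := by
      simp [Nat.div_add_mod, Finset.sum_add_distrib, Finset.mul_sum]
    rw [Finset.sum_add_distrib, ← Finset.mul_sum] at hsum
    linear_combination D * hsum + C * hγ

-- The two identities say that both terms of `F_{n,p}` have the same weight.
lemma exponent_identity_x {f g s t : ℕ} (hgf : g ≤ f) (hf : f ≤ 2 * g) :
    f * g * (s * g + t * (2 * g - f)) + (f - g) * (t * g * (f - g)) = g ^ 2 * (s * f + t * g) := by
  zify [hgf, hf]
  ring

lemma exponent_identity_last {m f g s t : ℕ} (hm : 1 ≤ m) (hgf : g ≤ f)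
    (h : m * f ≤ (m + 1) * g) :
    f * g * (s * (m * g - (m - 1) * f) + t * ((m + 1) * g - m * f)) +
        m * (f - g) * (t * g * (f - g)) =
      g * (m * g - (m - 1) * f) * (s * f + t * g) := by
  obtain ⟨k, rfl⟩ : ∃ k, m = k + 1 := ⟨m - 1, by omega⟩
  have h' : k * f ≤ (k + 1) * g := by nlinarith
  simp only [Nat.add_sub_cancel]
  zify [hgf, h, h']
  ring

section CommMonoid

variable {Q : Type*} [CommMonoid Q] {m : ℕ}

lemma pow_eq_pow_div_mul_pow_mod {y z : Q} {N : ℕ} (h : y ^ N = z) (k : ℕ) :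
    y ^ k = z ^ (k / N) * y ^ (k % N) := by
  rw [← h, ← pow_mul, ← pow_add, Nat.div_add_mod]

variable (x : Fin m → Q) (xn : Q) (y : Fin m → Q) (yn : Q)

def evalMonomial (A : Fin m → ℕ) (An : ℕ) (B : Fin m → ℕ) (C : ℕ) : Q :=
  (∏ j, x j ^ A j) * xn ^ An * (∏ j, y j ^ B j) * yn ^ C

lemma map_evalMonomial {Q' F : Type*} [CommMonoid Q'] [FunLike F Q Q'] [MonoidHomClass F Q Q']
    (ψ : F) (A : Fin m → ℕ) (An : ℕ) (B : Fin m → ℕ) (C : ℕ) :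
    ψ (evalMonomial x xn y yn A An B C) =
      evalMonomial (fun j => ψ (x j)) (ψ xn) (fun j => ψ (y j)) (ψ yn) A An B C := by
  simp only [evalMonomial, map_mul, map_prod, map_pow]

lemma evalMonomial_pow_mul_pow {N D c w : ℕ}
    (A : Fin m → ℕ) (An : ℕ) (B : Fin m → ℕ) (C : ℕ) :
    evalMonomial (fun j => x j ^ N) (xn ^ N) (fun j => x j ^ D * xn ^ D)
        ((∏ j, x j ^ c) * xn ^ w) A An B C =
      (∏ j, x j ^ (N * A j + D * B j + c * C)) * xn ^ (N * An + D * ∑ j, B j + w * C) := by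
  simp only [evalMonomial, mul_pow, ← pow_mul, pow_add, Finset.prod_mul_distrib,
    ← Finset.prod_pow, Finset.mul_sum, ← Finset.prod_pow_eq_pow_sum]
  ac_rfl

lemma evalMonomial_pow_of_pow_eq {P β γ δ : ℕ}
    (hyn : yn ^ P = (∏ j, x j) ^ β * xn ^ γ * (∏ j, y j) ^ δ)
    (A : Fin m → ℕ) (An : ℕ) (B : Fin m → ℕ) (C : ℕ) :
    evalMonomial x xn y yn A An B C ^ P =
      evalMonomial x xn y yn (fun j => P * A j + β * C) (P * An + γ * C)
        (fun j => P * B j + δ * C) 0 := by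
  simp only [evalMonomial, mul_pow, ← Finset.prod_pow, ← pow_mul']
  rw [pow_mul yn, hyn]
  simp only [mul_pow, ← Finset.prod_pow, ← pow_mul, pow_add, Finset.prod_mul_distrib, pow_zero,
    mul_one]
  ac_rfl

lemma evalMonomial_eq_of_pow_eq {N D : ℕ} (hy : ∀ j, y j ^ N = x j ^ D * xn ^ D)
    (E : Fin m → ℕ) (En : ℕ) (G : Fin m → ℕ) :
    evalMonomial x xn y yn E En G 0 =
      evalMonomial x xn y yn (fun j => E j + D * (G j / N)) (En + D * ∑ j, G j / N)
        (fun j => G j % N) 0 := by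
  simp only [evalMonomial, fun j => pow_eq_pow_div_mul_pow_mod (hy j) (G j), mul_pow,
    pow_add, ← pow_mul, Finset.prod_mul_distrib, Finset.mul_sum, ← Finset.prod_pow_eq_pow_sum]
  ac_rfl

theorem evalMonomial_pow_eq_of_weight_eq {N D P β γ δ c w : ℕ} (hN : 0 < N) (hD : D.Coprime N)
    (hy : ∀ j, y j ^ N = x j ^ D * xn ^ D)
    (hyn : yn ^ P = (∏ j, x j) ^ β * xn ^ γ * (∏ j, y j) ^ δ)
    (hβ : N * β + D * δ = c * P) (hγ : N * γ + m * D * δ = w * P)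
    {A A' B B' : Fin m → ℕ} {An An' C C' : ℕ}
    (hw : ∀ j, N * A j + D * B j + c * C = N * A' j + D * B' j + c * C')
    (hwn : N * An + D * ∑ j, B j + w * C = N * An' + D * ∑ j, B' j + w * C') :
    evalMonomial x xn y yn A An B C ^ P = evalMonomial x xn y yn A' An' B' C' ^ P := by
  have hnf := fun A An B C => (evalMonomial_pow_of_pow_eq x xn y yn hyn A An B C).trans
    (evalMonomial_eq_of_pow_eq x xn y yn hy _ _ _)
  rw [hnf, hnf]
  obtain ⟨hwj, hwl⟩ := weight_reduced_pow_eq hβ hγ A An B C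
  obtain ⟨hwj', hwl'⟩ := weight_reduced_pow_eq hβ hγ A' An' B' C'
  obtain ⟨he, hen, hr⟩ := reduced_eq_of_weight_eq hN hD (fun j => Nat.mod_lt _ hN)
    (fun j => Nat.mod_lt _ hN)
    (fun j => (hwj j).trans ((congrArg (P * ·) (hw j)).trans (hwj' j).symm))
    (hwl.trans ((congrArg (P * ·) hwn).trans hwl'.symm))
  rw [he, hen, hr]

end CommMonoid

section MvPolynomial

variable {R : Type*} {m : ℕ}

open Fin Sum

lemma monomial_one_eq_evalMonomial [CommSemiring R] (d : Fin (m + 1) ⊕ Fin (m + 1) →₀ ℕ) :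
    (monomial d 1 : MvPolynomial (Fin (m + 1) ⊕ Fin (m + 1)) R) =
      evalMonomial (fun j => X (inl j.castSucc)) (X (inl (last m)))
        (fun j => X (inr j.castSucc)) (X (inr (last m)))
        (fun j => d (inl j.castSucc)) (d (inl (last m)))
        (fun j => d (inr j.castSucc)) (d (inr (last m))) := by
  rw [monomial_eq, C_1, one_mul, Finsupp.prod_fintype _ _ fun _ => pow_zero _,
    Fintype.prod_sum_type, prod_univ_castSucc, prod_univ_castSucc, evalMonomial]
  ac_rfl

lemma prod_X_pow_mul_X_pow_injective [CommSemiring R] [Nontrivial R] {e e' : Fin m → ℕ}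
    {en en' : ℕ}
    (h : (∏ j, X j.castSucc ^ e j) * X (last m) ^ en =
      ((∏ j, X j.castSucc ^ e' j) * X (last m) ^ en' : MvPolynomial (Fin (m + 1)) R)) :
    e = e' ∧ en = en' := by
  have hmon : ∀ e en, (∏ j, X j.castSucc ^ e j) * X (last m) ^ en =
      (monomial (Finsupp.equivFunOnFinite.symm (snoc e en)) 1 : MvPolynomial (Fin (m + 1)) R) := by
    intro e en
    rw [monomial_eq, C_1, one_mul, Finsupp.prod_fintype _ _ fun _ => pow_zero _,
      prod_univ_castSucc]
    simp
  rw [hmon, hmon] at h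
  exact snoc_inj.mp
    (Finsupp.equivFunOnFinite.symm.injective (monomial_left_injective one_ne_zero h))

lemma weight_eq_of_monomial_sub_mem_ker [CommRing R] [Nontrivial R] {F : Type*}
    [FunLike F (MvPolynomial (Fin (m + 1) ⊕ Fin (m + 1)) R) (MvPolynomial (Fin (m + 1)) R)]
    [RingHomClass F (MvPolynomial (Fin (m + 1) ⊕ Fin (m + 1)) R) (MvPolynomial (Fin (m + 1)) R)]
    {φ : F} {N D c w : ℕ} (hx : ∀ i, φ (X (inl i)) = X i ^ N)
    (hy : ∀ j : Fin m, φ (X (inr j.castSucc)) = X j.castSucc ^ D * X (last m) ^ D)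
    (hyn : φ (X (inr (last m))) = (∏ j : Fin m, X j.castSucc ^ c) * X (last m) ^ w)
    {a b : Fin (m + 1) ⊕ Fin (m + 1) →₀ ℕ}
    (h : monomial a 1 - monomial b 1 ∈ RingHom.ker φ) :
    (∀ j : Fin m, N * a (inl j.castSucc) + D * a (inr j.castSucc) + c * a (inr (last m)) =
        N * b (inl j.castSucc) + D * b (inr j.castSucc) + c * b (inr (last m))) ∧
      N * a (inl (last m)) + D * ∑ j : Fin m, a (inr j.castSucc) + w * a (inr (last m)) =
        N * b (inl (last m)) + D * ∑ j : Fin m, b (inr j.castSucc) + w * b (inr (last m)) := by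
  rw [RingHom.mem_ker, map_sub, sub_eq_zero, monomial_one_eq_evalMonomial,
    monomial_one_eq_evalMonomial, map_evalMonomial, map_evalMonomial] at h
  simp only [hx, hy, hyn, evalMonomial_pow_mul_pow] at h
  obtain ⟨he, hen⟩ := prod_X_pow_mul_X_pow_injective h
  exact ⟨congrFun he, hen⟩

end MvPolynomial

/-- In the setting of the paper (`n ≥ 3`, coprime `f > g > 0`,
`(n-1)f ≤ ng`), let `p` be a prime and `p^α = sf + tg`. If `F = M − N ∈ ker φ` with `M, N`
monic monomials, then `M^{p^α} − N^{p^α}` lies in the ideal generated by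
`F₁, …, F_{n-1}, F_{n,p}`. -/
theorem stmt13 (n : ℕ) (hn : 3 ≤ n) (f g : ℕ) (hco : Nat.Coprime f g)
    (hg : 0 < g) (hgf : g < f) (hng : (n - 1) * f ≤ n * g)
    (K : Type*) [Field K]
    (p : ℕ) (α s t : ℕ) (hpst : p ^ α = s * f + t * g)
    (φ : MvPolynomial (Fin n ⊕ Fin n) K →ₐ[K] MvPolynomial (Fin n) K)
    (hφx : ∀ i : Fin n, φ (X (Sum.inl i)) = X i ^ (f * g))
    (hφy : ∀ i : Fin (n - 1), φ (X (Sum.inr (Fin.castLE (by omega) i))) =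
      X (Fin.castLE (by omega) i : Fin n) ^ (f - g) * X (⟨n - 1, by omega⟩ : Fin n) ^ (f - g))
    (hφyn : φ (X (Sum.inr (⟨n - 1, by omega⟩ : Fin n))) =
      (∏ i : Fin (n - 1), X (Fin.castLE (by omega) i : Fin n) ^ g ^ 2) *
        X (⟨n - 1, by omega⟩ : Fin n) ^ (g * ((n - 1) * g - (n - 2) * f)))
    (a b : (Fin n ⊕ Fin n) →₀ ℕ) (M N : MvPolynomial (Fin n ⊕ Fin n) K)
    (hM : M = monomial a (1 : K)) (hN : N = monomial b (1 : K))
    (hF : M - N ∈ RingHom.ker φ) :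
    M ^ (p ^ α) - N ^ (p ^ α) ∈
      Ideal.span
        ((Set.range fun i : Fin (n - 1) =>
            (X (Sum.inr (Fin.castLE (by omega) i : Fin n)) ^ (f * g) -
              X (Sum.inl (Fin.castLE (by omega) i : Fin n)) ^ (f - g) *
                X (Sum.inl (⟨n - 1, by omega⟩ : Fin n)) ^ (f - g) :
              MvPolynomial (Fin n ⊕ Fin n) K)) ∪
          {(X (Sum.inr (⟨n - 1, by omega⟩ : Fin n)) ^ (p ^ α) -
            (∏ i : Fin (n - 1), X (Sum.inl (Fin.castLE (by omega) i : Fin n))) ^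
                (s * g + t * (2 * g - f)) *
              X (Sum.inl (⟨n - 1, by omega⟩ : Fin n)) ^
                (s * ((n - 1) * g - (n - 2) * f) + t * (n * g - (n - 1) * f)) *
              (∏ i : Fin (n - 1), X (Sum.inr (Fin.castLE (by omega) i : Fin n))) ^
                (t * g * (f - g)) :
            MvPolynomial (Fin n ⊕ Fin n) K)}) := by
  obtain ⟨m, rfl⟩ : ∃ m, n = m + 1 := ⟨n - 1, by omega⟩
  have hm : 2 ≤ m := by omega
  have hng' : m * f ≤ (m + 1) * g := hng
  have hf : f ≤ 2 * g := by nlinarith [Nat.mul_le_mul_right (f - g) hm]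
  subst hM hN
  obtain ⟨hw, hwn⟩ := weight_eq_of_monomial_sub_mem_ker hφx hφy hφyn hF
  rw [hpst]
  refine Ideal.Quotient.eq.mp ?_
  simp only [map_pow, monomial_one_eq_evalMonomial, map_evalMonomial]
  refine evalMonomial_pow_eq_of_weight_eq _ _ _ _ (N := f * g) (D := f - g)
    (Nat.mul_pos (hg.trans hgf) hg)
    (Nat.Coprime.mul_right ((Nat.coprime_self_sub_left hgf.le).mpr hco.symm)
      ((Nat.coprime_sub_self_left hgf.le).mpr hco)) (fun j => ?_) ?_
    (exponent_identity_x hgf.le hf) (exponent_identity_last (by omega) hgf.le hng') hw hwn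
  · simp only [← map_pow, ← map_mul]
    exact Ideal.Quotient.eq.mpr (Ideal.subset_span (Set.mem_union_left _ ⟨j, rfl⟩))
  · simp only [← map_pow, ← map_mul, ← map_prod]
    exact Ideal.Quotient.eq.mpr (Ideal.subset_span (Set.mem_union_right _ rfl))
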